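/- arXiv:1408.0560 — 3 statements merged into one kernel-verified Lean document; each statement's English description precedes it below -/
import Mathlib

section
/- For any tight IC POVM on ℂ^d, the average purity 𝓅 satisfies 1/d < 𝓅 ≤ 1, hence α = (d²𝓅 − d)/(d²−1) satisfies 0 < α ≤ d/(d+1), and α = d/(d+1) (equivalently 𝓅 = 1) holds if and only if every outcome has rank one. -/
/-!
Evaluating the frame identity `d ∑ⱼ |Πⱼ⟩⟩⟨⟨Πⱼ| / tr Πⱼ = α I + β |1⟩⟩⟨⟨1|` at the identity gives
`α + β d = d` (as `∑ⱼ Πⱼ = 1`), and taking its trace as a superoperator on the `d²`-dimensional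
space of Hermitian matrices gives `d² 𝓅 = α d² + β d`. Hence `α (d² - 1) = d² 𝓅 - d`, so `α > 0`
forces `𝓅 > 1 / d`. The bound `𝓅 ≤ 1` is `tr(A²) ≤ (tr A)²` for `A ≥ 0`, i.e.
`∑ λᵢ² ≤ (∑ λᵢ)²` for the nonnegative eigenvalues, with equality iff exactly one of them is
nonzero, i.e. `rank A = 1`.
-/

open Matrix ComplexOrder

noncomputable section

abbrev Mat (d : ℕ) := Matrix (Fin d) (Fin d) ℂ

/-- The real vector space of Hermitian `d × d` complex matrices. -/
abbrev HermM (d : ℕ) : Submodule ℝ (Mat d) := selfAdjoint.submodule ℝ (Mat d)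

/-- The identity matrix as a Hermitian matrix. -/
def hermOne (d : ℕ) : HermM d := ⟨1, IsSelfAdjoint.one (Mat d)⟩

/-- The superoperator `|A⟩⟩⟨⟨B| : X ↦ tr(B X) • A` on Hermitian matrices. -/
def outerSO (d : ℕ) (A B : HermM d) : HermM d →ₗ[ℝ] HermM d :=
  (Complex.reLm ∘ₗ Matrix.traceLinearMap (Fin d) ℝ ℂ ∘ₗ
    LinearMap.mulLeft ℝ (B : Mat d) ∘ₗ (HermM d).subtype).smulRight A

lemma finrank_selfAdjoint_submodule_mul_two (A : Type*) [AddCommGroup A] [Module ℂ A]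
    [StarAddMonoid A] [StarModule ℂ A] [FiniteDimensional ℝ A] :
    Module.finrank ℝ (selfAdjoint.submodule ℝ A) * 2 = Module.finrank ℝ A := by
  have h := LinearMap.finrank_range_add_finrank_ker (imaginaryPart (A := A))
  rw [ker_imaginaryPart, LinearMap.range_eq_top.mpr imaginaryPart_surjective, finrank_top] at h
  rw [← h, mul_two]
  rfl

lemma finrank_hermM (d : ℕ) : Module.finrank ℝ (HermM d) = d ^ 2 := by
  have h := finrank_selfAdjoint_submodule_mul_two (Mat d)
  rw [Module.finrank_matrix, Complex.finrank_real_complex, Fintype.card_fin] at h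
  linarith

lemma Matrix.IsHermitian.trace_mul_self {n 𝕜 : Type*} [Fintype n] [DecidableEq n] [RCLike 𝕜]
    {A : Matrix n n 𝕜} (hA : A.IsHermitian) :
    (A * A).trace = ∑ i, ((hA.eigenvalues i ^ 2 : ℝ) : 𝕜) := by
  conv_lhs => rw [hA.spectral_theorem, ← map_mul, Unitary.conjStarAlgAut_apply, trace_mul_cycle,
    Unitary.coe_star_mul_self, one_mul, diagonal_mul_diagonal, trace_diagonal]
  simp [sq]

lemma sum_sq_eq_sq_sum_iff_card_ne_zero_eq_one {ι : Type*} [Fintype ι] {f : ι → ℝ}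
    (hf : ∀ i, 0 ≤ f i) (hpos : 0 < ∑ i, f i) :
    ∑ i, f i ^ 2 = (∑ i, f i) ^ 2 ↔ Fintype.card {i // f i ≠ 0} = 1 := by
  set S := ∑ i, f i with hS
  have hle : ∀ i, f i ≤ S := fun i ↦ Finset.single_le_sum (fun j _ ↦ hf j) (Finset.mem_univ i)
  constructor
  · intro heq
    -- `S² - ∑ fᵢ² = ∑ fᵢ (S - fᵢ)` is a sum of nonnegative terms, so each `fᵢ` is `0` or `S`
    have hgap : ∑ i, f i * (S - f i) = 0 := by
      simp only [mul_sub, Finset.sum_sub_distrib, ← Finset.sum_mul, ← sq]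
      linarith
    have heqS : ∀ i, f i ≠ 0 → f i = S := fun i hi ↦ by
      have := (Finset.sum_eq_zero_iff_of_nonneg fun j _ ↦
        mul_nonneg (hf j) (sub_nonneg.2 (hle j))).1 hgap i (Finset.mem_univ i)
      linarith [(mul_eq_zero.1 this).resolve_left hi]
    obtain ⟨i₀, -, hi₀⟩ := Finset.exists_ne_zero_of_sum_ne_zero hpos.ne'
    refine Fintype.card_eq_one_iff.2 ⟨⟨i₀, hi₀⟩, fun ⟨j, hj⟩ ↦ Subtype.ext ?_⟩
    by_contra hji
    classical
    have hpair : f j + f i₀ ≤ S := by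
      simpa [Finset.sum_pair hji] using
        Finset.sum_le_sum_of_subset_of_nonneg (Finset.subset_univ {j, i₀}) fun k _ _ ↦ hf k
    linarith [heqS j hj, heqS i₀ hi₀]
  · intro hcard
    obtain ⟨⟨i₀, _⟩, huniq⟩ := Fintype.card_eq_one_iff.1 hcard
    have hzero : ∀ j, j ≠ i₀ → f j = 0 := fun j hj ↦ by
      by_contra h
      exact hj (congrArg Subtype.val (huniq ⟨j, h⟩))
    rw [hS, Fintype.sum_eq_single i₀ hzero,
      Fintype.sum_eq_single i₀ fun j hj ↦ by simp [hzero j hj]]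

def purity {m : Type*} [Fintype m] (A : Matrix m m ℂ) : ℝ :=
  (trace (A * A)).re / (trace A).re ^ 2

namespace Matrix.PosSemidef

variable {m : Type*} [Fintype m] [DecidableEq m] {A : Matrix m m ℂ}

lemma trace_re_eq_sum_eigenvalues (hA : A.PosSemidef) :
    (trace A).re = ∑ i, hA.1.eigenvalues i := by
  simp [hA.1.trace_eq_sum_eigenvalues, Complex.re_sum]

lemma trace_mul_self_re_eq_sum_eigenvalues_sq (hA : A.PosSemidef) :
    (trace (A * A)).re = ∑ i, hA.1.eigenvalues i ^ 2 := by
  simp [hA.1.trace_mul_self, Complex.re_sum, -Complex.ofReal_pow]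

lemma purity_le_one (hA : A.PosSemidef) : purity A ≤ 1 := by
  refine div_le_one_of_le₀ ?_ (sq_nonneg _)
  rw [hA.trace_re_eq_sum_eigenvalues, hA.trace_mul_self_re_eq_sum_eigenvalues_sq]
  exact Finset.sum_sq_le_sq_sum_of_nonneg fun i _ ↦ hA.eigenvalues_nonneg i

lemma purity_eq_one_iff_rank_eq_one (hA : A.PosSemidef) (htr : 0 < (trace A).re) :
    purity A = 1 ↔ A.rank = 1 := by
  rw [purity, div_eq_one_iff_eq (pow_pos htr 2).ne', hA.trace_re_eq_sum_eigenvalues,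
    hA.trace_mul_self_re_eq_sum_eigenvalues_sq, hA.1.rank_eq_card_non_zero_eigs]
  rw [hA.trace_re_eq_sum_eigenvalues] at htr
  exact sum_sq_eq_sq_sum_iff_card_ne_zero_eq_one hA.eigenvalues_nonneg htr

end Matrix.PosSemidef

section POVM

variable {ι m : Type*} [Fintype ι] [Fintype m] [DecidableEq m] {P : ι → Matrix m m ℂ}

lemma sum_trace_re_eq_card (hsum : ∑ j, P j = 1) :
    ∑ j, (trace (P j)).re = Fintype.card m := by
  simpa [trace_sum, Complex.re_sum] using congrArg (fun A ↦ (trace A).re) hsum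

lemma sum_trace_mul_purity_le_card (hpsd : ∀ j, (P j).PosSemidef) (hsum : ∑ j, P j = 1) :
    ∑ j, (trace (P j)).re * purity (P j) ≤ Fintype.card m := by
  rw [← sum_trace_re_eq_card hsum]
  exact Finset.sum_le_sum fun j _ ↦
    mul_le_of_le_one_right (Complex.nonneg_iff.1 (hpsd j).trace_nonneg).1 (hpsd j).purity_le_one

lemma sum_trace_mul_purity_eq_card_iff (hpsd : ∀ j, (P j).PosSemidef)
    (htr : ∀ j, 0 < (trace (P j)).re) (hsum : ∑ j, P j = 1) :
    ∑ j, (trace (P j)).re * purity (P j) = Fintype.card m ↔ ∀ j, (P j).rank = 1 := by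
  rw [← sum_trace_re_eq_card hsum, Finset.sum_eq_sum_iff_of_le fun j _ ↦
    mul_le_of_le_one_right (htr j).le (hpsd j).purity_le_one]
  simp only [Finset.mem_univ, true_implies]
  exact forall_congr' fun j ↦
    (mul_eq_left₀ (htr j).ne').trans ((hpsd j).purity_eq_one_iff_rank_eq_one (htr j))

end POVM

lemma outerSO_apply (d : ℕ) (A B X : HermM d) :
    outerSO d A B X = (trace ((B : Mat d) * (X : Mat d))).re • A := rfl

lemma trace_outerSO (d : ℕ) (A B : HermM d) :
    LinearMap.trace ℝ (HermM d) (outerSO d A B) = (trace ((B : Mat d) * (A : Mat d))).re :=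
  LinearMap.trace_smulRight _ _

section TightFrame

variable {d : ℕ} {ι : Type*} [Fintype ι]

def frameSO (d : ℕ) (P : ι → HermM d) : HermM d →ₗ[ℝ] HermM d :=
  (d : ℝ) • ∑ j, ((trace (P j : Mat d)).re)⁻¹ • outerSO d (P j) (P j)

lemma frameSO_apply_hermOne {P : ι → HermM d} (htr : ∀ j, (trace (P j : Mat d)).re ≠ 0) :
    frameSO d P (hermOne d) = (d : ℝ) • ∑ j, P j := by
  simp only [frameSO, LinearMap.smul_apply, LinearMap.sum_apply, outerSO_apply, hermOne, mul_one,
    smul_smul, inv_mul_cancel₀ (htr _), one_smul]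

lemma trace_frameSO {P : ι → HermM d} (htr : ∀ j, (trace (P j : Mat d)).re ≠ 0) :
    LinearMap.trace ℝ (HermM d) (frameSO d P) =
      d * ∑ j, (trace (P j : Mat d)).re * purity (P j : Mat d) := by
  simp only [frameSO, map_smul, map_sum, trace_outerSO, smul_eq_mul, purity]
  congr 1
  refine Finset.sum_congr rfl fun j _ ↦ ?_
  field_simp [htr j]

def tightSO (d : ℕ) (α β : ℝ) : HermM d →ₗ[ℝ] HermM d :=
  α • LinearMap.id + β • outerSO d (hermOne d) (hermOne d)

lemma tightSO_apply_hermOne (α β : ℝ) : tightSO d α β (hermOne d) = (α + β * d) • hermOne d := by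
  simp [tightSO, outerSO_apply, hermOne, add_smul, mul_smul]

lemma trace_tightSO (α β : ℝ) :
    LinearMap.trace ℝ (HermM d) (tightSO d α β) = α * d ^ 2 + β * d := by
  simp [tightSO, trace_outerSO, finrank_hermM, hermOne]

lemma hermOne_ne_zero (hd : d ≠ 0) : hermOne d ≠ 0 := by
  have : NeZero d := ⟨hd⟩
  simp [hermOne, ← Subtype.coe_ne_coe]

lemma add_mul_eq_of_frameSO_eq_tightSO (hd : d ≠ 0) {P : ι → HermM d} {α β : ℝ}
    (htr : ∀ j, (trace (P j : Mat d)).re ≠ 0) (hsum : ∑ j, (P j : Mat d) = 1)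
    (h : frameSO d P = tightSO d α β) : α + β * d = d := by
  have hsum' : ∑ j, P j = hermOne d := Subtype.ext (by simpa [hermOne] using hsum)
  have := LinearMap.congr_fun h (hermOne d)
  rw [frameSO_apply_hermOne htr, tightSO_apply_hermOne, hsum'] at this
  exact (smul_left_injective ℝ (hermOne_ne_zero hd) this).symm

end TightFrame

lemma bounds_of_mul_sq_sub_one_eq {d α p : ℝ} (hd : 2 ≤ d) (hα : 0 < α) (hp : p ≤ 1)
    (h : α * (d ^ 2 - 1) = d ^ 2 * p - d) :
    1 / d < p ∧ α ≤ d / (d + 1) ∧ (α = d / (d + 1) ↔ p = 1) := by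
  have hd1 : 0 < d - 1 := by linarith
  have h' : α * (d + 1) * (d - 1) = d * (d * p - 1) := by linear_combination h
  refine ⟨?_, ?_, ?_⟩
  · rw [div_lt_iff₀ (by linarith)]
    nlinarith [mul_pos (mul_pos hα (by linarith : 0 < d + 1)) hd1]
  · rw [le_div_iff₀ (by linarith)]
    nlinarith
  · rw [eq_div_iff (by linarith)]
    constructor
    · intro hαd
      rw [hαd] at h'
      have : d ^ 2 * (p - 1) = 0 := by linear_combination -h'
      linarith [(mul_eq_zero.1 this).resolve_left (by positivity)]
    · intro hp1
      rw [hp1] at h'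
      nlinarith

/-- For any tight IC POVM on ℂ^d, the average purity 𝓅 satisfies
1/d < 𝓅 ≤ 1, hence 0 < α ≤ d/(d+1); moreover α = d/(d+1) iff 𝓅 = 1 iff every
outcome has rank one. -/
theorem tightIC_purity_bounds (d n : ℕ) (hd : 2 ≤ d)
    (P : Fin n → HermM d) (α β 𝓅 : ℝ)
    (hpsd : ∀ j, ((P j : Mat d)).PosSemidef)
    (htrpos : ∀ j, 0 < (Matrix.trace (P j : Mat d)).re)
    (hsum : ∑ j, (P j : Mat d) = 1)
    (hα : 0 < α)
    (hframe : (d : ℝ) • ∑ j, ((Matrix.trace (P j : Mat d)).re)⁻¹ • outerSO d (P j) (P j) =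
      α • LinearMap.id + β • outerSO d (hermOne d) (hermOne d))
    (h𝓅 : 𝓅 = (∑ j, (Matrix.trace (P j : Mat d)).re *
      ((Matrix.trace ((P j : Mat d) * (P j : Mat d))).re /
        (Matrix.trace (P j : Mat d)).re ^ 2)) / d) :
    (1 / (d : ℝ) < 𝓅 ∧ 𝓅 ≤ 1) ∧
    (0 < α ∧ α ≤ (d : ℝ) / (d + 1)) ∧
    (α = (d : ℝ) / (d + 1) ↔ 𝓅 = 1) ∧
    (α = (d : ℝ) / (d + 1) ↔ ∀ j, (P j : Mat d).rank = 1) := by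
  change frameSO d P = tightSO d α β at hframe
  have hd' : (2 : ℝ) ≤ d := by exact_mod_cast hd
  have htr : ∀ j, (trace (P j : Mat d)).re ≠ 0 := fun j ↦ (htrpos j).ne'
  have hQ : ∑ j, (trace (P j : Mat d)).re * purity (P j : Mat d) = d * 𝓅 := by
    rw [h𝓅, mul_div_cancel₀ _ (by positivity)]; rfl
  have hone := add_mul_eq_of_frameSO_eq_tightSO (by omega) htr hsum hframe
  have htrace := congrArg (LinearMap.trace ℝ (HermM d)) hframe
  rw [trace_frameSO htr, trace_tightSO, hQ] at htrace
  have hle := sum_trace_mul_purity_le_card (P := fun j ↦ (P j : Mat d)) hpsd hsum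
  have hrank := sum_trace_mul_purity_eq_card_iff (P := fun j ↦ (P j : Mat d)) hpsd htrpos hsum
  rw [Fintype.card_fin, hQ] at hle hrank
  have hp_le : 𝓅 ≤ 1 := le_of_mul_le_mul_left (by simpa using hle) (by positivity)
  obtain ⟨hlt, hαle, hαiff⟩ :=
    bounds_of_mul_sq_sub_one_eq hd' hα hp_le (by linear_combination -htrace - hone)
  exact ⟨⟨hlt, hp_le⟩, ⟨hα, hαle⟩, hαiff,
    hαiff.trans ((mul_eq_left₀ (by positivity)).symm.trans hrank)⟩
end
end

section
/- Let F be a positive semidefinite superoperator on Hermitian d×d matrices with Tr(F) = d² 𝓅 fixed, invertible, and having the identity matrix 1 as an eigenvector with eigenvalue d. Then Tr(F⁻¹) ≥ 1/d + (d²−1)²/(d²𝓅 − d), with equality if and only if F = α I + β |1⟩⟩⟨⟨1| with α = (d²𝓅 − d)/(d²−1) and β = 1 − α/d. -/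
open Matrix ComplexOrder

noncomputable section

/-!
Let `P` be the orthogonal projection onto the unit eigenvector `e` of `F` (eigenvalue `μ`) and
`Q = 1 - P`. Since `F` commutes with `P` and `F G = G F = 1`, for every real `β`
`Tr(Q (F - β) G (F - β) Q) = Tr(F Q) - 2 β Tr Q + β² Tr(G Q)`, and this is nonnegative, vanishing
only when `(F - β) Q = 0`, because `G` is positive definite. At `β = 0` it gives
`Tr(F Q) = Tr F - μ ≥ 0`, with equality only if `F Q = 0`, impossible for invertible `F` once the
dimension is at least two. At `β = α = Tr(F Q) / Tr Q` it becomes `α² (Tr G - 1/μ) - α Tr Q ≥ 0`,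
which is the bound, with equality exactly when `F = α` on `e⊥`, i.e. `F = α + (μ - α) P`.
-/

open InnerProductSpace

namespace LinearMap

variable {E : Type*} [NormedAddCommGroup E] [InnerProductSpace ℝ E]
  {T G : E →ₗ[ℝ] E} {e : E} {μ : ℝ}

lemma mul_rankOne_self_of_apply_eq_smul {S : E →ₗ[ℝ] E} {c : ℝ} (hSe : S e = c • e) :
    S * (rankOne ℝ e e : E →ₗ[ℝ] E) = c • (rankOne ℝ e e : E →ₗ[ℝ] E) := by
  ext x
  simp [hSe, smul_comm c]

lemma IsSymmetric.rankOne_self_mul_of_apply_eq_smul {S : E →ₗ[ℝ] E} (hS : S.IsSymmetric)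
    {c : ℝ} (hSe : S e = c • e) :
    (rankOne ℝ e e : E →ₗ[ℝ] E) * S = c • (rankOne ℝ e e : E →ₗ[ℝ] E) := by
  ext x
  simp only [Module.End.mul_apply, ContinuousLinearMap.coe_coe, rankOne_apply,
    LinearMap.smul_apply]
  rw [← hS, hSe, real_inner_smul_left, mul_smul]

lemma IsSymmetric.commute_one_sub_rankOne (hT : T.IsSymmetric) (hTe : T e = μ • e) :
    Commute T (1 - rankOne ℝ e e) := by
  rw [Commute, SemiconjBy, mul_sub, sub_mul, mul_one, one_mul,
    mul_rankOne_self_of_apply_eq_smul hTe, hT.rankOne_self_mul_of_apply_eq_smul hTe]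

lemma IsSymmetric.isSymmetric_sub_smul_one_mul_one_sub_rankOne (hT : T.IsSymmetric)
    (hTe : T e = μ • e) (β : ℝ) : ((T - β • 1) * (1 - rankOne ℝ e e)).IsSymmetric :=
  (hT.sub ((IsSymmetric.one (E := E)).smul (by simp))).mul_of_commute
    (IsSymmetric.one.sub (isSymmetric_rankOne_self e))
    ((hT.commute_one_sub_rankOne hTe).sub_left ((Commute.one_left _).smul_left β))

lemma IsSymmetric.isSymmetric_of_mul_eq_one (hT : T.IsSymmetric) (hTG : T * G = 1) :
    G.IsSymmetric := fun x y => by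
  have hinv (z : E) : T (G z) = z := by rw [← Module.End.mul_apply, hTG, Module.End.one_apply]
  calc ⟪G x, y⟫_ℝ = ⟪G x, T (G y)⟫_ℝ := by rw [hinv]
    _ = ⟪x, G y⟫_ℝ := by rw [← hT, hinv]

lemma inner_map_self_pos_of_mul_eq_one (hTpos : ∀ x ≠ 0, 0 < ⟪T x, x⟫_ℝ) (hTG : T * G = 1) {x : E}
    (hx : x ≠ 0) : 0 < ⟪G x, x⟫_ℝ := by
  have hinv (z : E) : T (G z) = z := by rw [← Module.End.mul_apply, hTG, Module.End.one_apply]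
  have hGx : G x ≠ 0 := fun h => hx (by rw [← hinv x, h, map_zero])
  simpa [hinv, real_inner_comm] using hTpos (G x) hGx

lemma inner_map_self_nonneg_of_pos (hG : ∀ x ≠ 0, 0 < ⟪G x, x⟫_ℝ) (x : E) : 0 ≤ ⟪G x, x⟫_ℝ := by
  rcases eq_or_ne x 0 with rfl | hx
  · simp
  · exact (hG x hx).le

lemma apply_eq_inv_smul_of_mul_eq_one (hGT : G * T = 1) (he : e ≠ 0) (hTe : T e = μ • e) :
    G e = μ⁻¹ • e := by
  have hGTe : μ • G e = e := by
    rw [← map_smul, ← hTe, ← Module.End.mul_apply, hGT, Module.End.one_apply]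
  have hμ : μ ≠ 0 := by
    rintro rfl
    exact he (by rw [← hGTe, zero_smul])
  exact (eq_inv_smul_iff₀ hμ).mpr hGTe

lemma finrank_le_one_of_eq_smul_rankOne (hGT : G * T = 1)
    (hT : T = μ • (rankOne ℝ e e : E →ₗ[ℝ] E)) : Module.finrank ℝ E ≤ 1 := by
  refine finrank_le_one (G e) fun x => ⟨μ * ⟪e, x⟫_ℝ, ?_⟩
  calc (μ * ⟪e, x⟫_ℝ) • G e = G (T x) := by simp [hT, mul_smul]
    _ = x := by rw [← Module.End.mul_apply, hGT, Module.End.one_apply]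

lemma IsSymmetric.trace_sandwich_eq_sum {ι : Type*} [Fintype ι] {A : E →ₗ[ℝ] E}
    (hA : A.IsSymmetric) (G : E →ₗ[ℝ] E) (b : OrthonormalBasis ι ℝ E) :
    trace ℝ E (A * G * A) = ∑ i, ⟪G (A (b i)), A (b i)⟫_ℝ := by
  rw [trace_eq_sum_inner _ b]
  refine Fintype.sum_congr _ _ fun i => ?_
  rw [Module.End.mul_apply, Module.End.mul_apply, ← hA, real_inner_comm]

variable [FiniteDimensional ℝ E]

lemma trace_rankOne_self (he : ‖e‖ = 1) : trace ℝ E (rankOne ℝ e e : E →ₗ[ℝ] E) = 1 := by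
  rw [trace_rankOne, real_inner_self_eq_norm_sq, he, one_pow]

lemma IsSymmetric.trace_sandwich_nonneg {A : E →ₗ[ℝ] E} (hA : A.IsSymmetric)
    (hG : ∀ x, 0 ≤ ⟪G x, x⟫_ℝ) : 0 ≤ trace ℝ E (A * G * A) := by
  rw [hA.trace_sandwich_eq_sum G (stdOrthonormalBasis ℝ E)]
  exact Finset.sum_nonneg fun i _ => hG _

lemma IsSymmetric.trace_sandwich_eq_zero_iff {A : E →ₗ[ℝ] E} (hA : A.IsSymmetric)
    (hG : ∀ x ≠ 0, 0 < ⟪G x, x⟫_ℝ) : trace ℝ E (A * G * A) = 0 ↔ A = 0 := by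
  refine ⟨fun h => ?_, fun h => by simp [h]⟩
  set b := stdOrthonormalBasis ℝ E
  rw [hA.trace_sandwich_eq_sum G b,
    Finset.sum_eq_zero_iff_of_nonneg fun i _ => inner_map_self_nonneg_of_pos hG _] at h
  refine b.toBasis.ext fun i => ?_
  by_contra hi
  exact (hG _ hi).ne' (by simpa using h i (Finset.mem_univ i))

lemma IsSymmetric.trace_sandwich_compl_rankOne (hT : T.IsSymmetric) (hGT : G * T = 1)
    (hTG : T * G = 1) (he : ‖e‖ = 1) (hTe : T e = μ • e) (β : ℝ) :
    trace ℝ E ((T - β • 1) * (1 - rankOne ℝ e e) * G * ((T - β • 1) * (1 - rankOne ℝ e e))) =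
      trace ℝ E T - μ - 2 * β * (Module.finrank ℝ E - 1) + β ^ 2 * (trace ℝ E G - μ⁻¹) := by
  set P : E →ₗ[ℝ] E := ↑(rankOne ℝ e e)
  have hGe : G e = μ⁻¹ • e :=
    apply_eq_inv_smul_of_mul_eq_one hGT (norm_ne_zero_iff.mp (by rw [he]; exact one_ne_zero)) hTe
  have hTP : T * P = μ • P := mul_rankOne_self_of_apply_eq_smul hTe
  have hGP : G * P = μ⁻¹ • P := mul_rankOne_self_of_apply_eq_smul hGe
  have hP1 : trace ℝ E P = 1 := trace_rankOne_self he
  have hQ : (1 - P) * (1 - P) = 1 - P :=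
    (isSymmetricProjection_rankOne_self (𝕜 := ℝ) he).isIdempotentElem.one_sub
  have hTQ : Commute (T - β • 1) (1 - P) :=
    (hT.commute_one_sub_rankOne hTe).sub_left ((Commute.one_left _).smul_left β)
  have hGQ : Commute G (1 - P) :=
    (hT.isSymmetric_of_mul_eq_one hTG).commute_one_sub_rankOne hGe
  calc trace ℝ E ((T - β • 1) * (1 - P) * G * ((T - β • 1) * (1 - P)))
      = trace ℝ E ((T - β • 1) * G * (T - β • 1) * ((1 - P) * (1 - P))) := by
        simp only [mul_assoc]
        rw [← mul_assoc (1 - P) G, ← hGQ.eq, mul_assoc G, ← mul_assoc (1 - P), ← hTQ.eq,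
          mul_assoc (T - β • 1) (1 - P)]
    _ = trace ℝ E ((T - (2 * β) • 1 + β ^ 2 • G) * (1 - P)) := by
        rw [hQ]
        congr 2
        simp only [sub_mul, mul_sub, hTG, hGT, smul_mul_assoc, mul_smul_comm, one_mul, mul_one]
        module
    _ = _ := by
        simp only [add_mul, sub_mul, mul_sub, mul_one, one_mul, hTP, hGP, smul_mul_assoc, map_add,
          map_sub, map_smul, trace_one, hP1, smul_eq_mul]
        ring

theorem IsSymmetric.trace_inverse_bound_of_norm_eq_one (hT : T.IsSymmetric)
    (hTpos : ∀ x ≠ 0, 0 < ⟪T x, x⟫_ℝ) (hGT : G * T = 1) (hn : 2 ≤ Module.finrank ℝ E)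
    (he : ‖e‖ = 1) (hTe : T e = μ • e) {α : ℝ}
    (hα : trace ℝ E T = μ + (Module.finrank ℝ E - 1) * α) :
    μ⁻¹ + (Module.finrank ℝ E - 1) / α ≤ trace ℝ E G ∧
      (trace ℝ E G = μ⁻¹ + (Module.finrank ℝ E - 1) / α ↔
        T = α • 1 + (μ - α) • (rankOne ℝ e e : E →ₗ[ℝ] E)) := by
  set P : E →ₗ[ℝ] E := ↑(rankOne ℝ e e)
  have hTG : T * G = 1 := mul_eq_one_comm.mp hGT
  have hGpos (x : E) (hx : x ≠ 0) : 0 < ⟪G x, x⟫_ℝ := inner_map_self_pos_of_mul_eq_one hTpos hTG hx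
  have hA (β : ℝ) : (T - β • 1) * (1 - P) = T - (β • 1 + (μ - β) • P) := by
    rw [mul_sub, mul_one, sub_mul, mul_rankOne_self_of_apply_eq_smul hTe, smul_mul_assoc, one_mul]
    module
  have hS_nonneg (β : ℝ) :=
    (hT.isSymmetric_sub_smul_one_mul_one_sub_rankOne hTe β).trace_sandwich_nonneg
      (inner_map_self_nonneg_of_pos hGpos)
  have hS_eq_zero (β : ℝ) :=
    (hT.isSymmetric_sub_smul_one_mul_one_sub_rankOne hTe β).trace_sandwich_eq_zero_iff hGpos
  have hS (β : ℝ) := hT.trace_sandwich_compl_rankOne hGT hTG he hTe β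
  have hn1 : (0 : ℝ) < Module.finrank ℝ E - 1 := by
    have : (2 : ℝ) ≤ Module.finrank ℝ E := by exact_mod_cast hn
    linarith
  have hα_pos : 0 < α := by
    by_contra! hα_nonpos
    have h0 := (hS_nonneg 0).antisymm' (by rw [hS, hα]; nlinarith)
    rw [hS_eq_zero, hA, sub_eq_zero, zero_smul, zero_add, sub_zero] at h0
    exact absurd (finrank_le_one_of_eq_smul_rankOne hGT h0) (by omega)
  have hSα : trace ℝ E ((T - α • 1) * (1 - P) * G * ((T - α • 1) * (1 - P))) =
      α ^ 2 * (trace ℝ E G - (μ⁻¹ + (Module.finrank ℝ E - 1) / α)) := by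
    rw [hS, hα]
    field_simp
    ring
  constructor
  · have := hS_nonneg α
    rwa [hSα, mul_nonneg_iff_of_pos_left (by positivity), sub_nonneg] at this
  · rw [← sub_eq_zero, ← mul_eq_zero_iff_left (pow_pos hα_pos 2).ne', ← hSα, hS_eq_zero, hA,
      sub_eq_zero]

theorem IsSymmetric.trace_inverse_bound {u : E} (hT : T.IsSymmetric)
    (hTpos : ∀ x ≠ 0, 0 < ⟪T x, x⟫_ℝ) (hGT : G * T = 1) (hn : 2 ≤ Module.finrank ℝ E)
    (hu : u ≠ 0) (hTu : T u = μ • u) {α : ℝ}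
    (hα : trace ℝ E T = μ + (Module.finrank ℝ E - 1) * α) :
    μ⁻¹ + (Module.finrank ℝ E - 1) / α ≤ trace ℝ E G ∧
      (trace ℝ E G = μ⁻¹ + (Module.finrank ℝ E - 1) / α ↔
        T = α • 1 + ((μ - α) / ‖u‖ ^ 2) • (rankOne ℝ u u : E →ₗ[ℝ] E)) := by
  have he : ‖‖u‖⁻¹ • u‖ = 1 := by
    rw [norm_smul, norm_inv, norm_norm, inv_mul_cancel₀ (norm_ne_zero_iff.mpr hu)]
  have hP : (rankOne ℝ (‖u‖⁻¹ • u) (‖u‖⁻¹ • u) : E →ₗ[ℝ] E) =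
      (‖u‖ ^ 2)⁻¹ • (rankOne ℝ u u : E →ₗ[ℝ] E) := by
    ext x
    simp [smul_smul, sq, mul_comm]
  have := hT.trace_inverse_bound_of_norm_eq_one hTpos hGT hn he
    (by rw [map_smul, hTu, smul_comm]) hα
  rwa [hP, smul_smul, ← div_eq_mul_inv] at this

end LinearMap

namespace HermM

variable {d : ℕ}

lemma finrank_eq : Module.finrank ℝ (HermM d) = d ^ 2 := by
  have key := LinearMap.finrank_range_add_finrank_ker
    (imaginaryPart : Mat d →ₗ[ℝ] selfAdjoint (Mat d))
  rw [LinearMap.range_eq_top.mpr imaginaryPart_surjective, finrank_top, ker_imaginaryPart] at key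
  have e : selfAdjoint (Mat d) ≃ₗ[ℝ] HermM d := LinearEquiv.refl ℝ _
  rw [e.finrank_eq, Module.finrank_matrix, Complex.finrank_real_complex, Fintype.card_fin] at key
  linarith

lemma zero_le_trace_mul_self (X : HermM d) : 0 ≤ trace ((X : Mat d) * (X : Mat d)) := by
  simpa [show (X : Mat d)ᴴ = X from X.2] using
    (posSemidef_conjTranspose_mul_self (X : Mat d)).trace_nonneg

lemma trace_mul_self_eq_zero_iff (X : HermM d) :
    trace ((X : Mat d) * (X : Mat d)) = 0 ↔ X = 0 := by
  nth_rewrite 1 [← show (X : Mat d)ᴴ = X from X.2]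
  rw [trace_conjTranspose_mul_self_eq_zero_iff, ZeroMemClass.coe_eq_zero]

abbrev innerCore (d : ℕ) : InnerProductSpace.Core ℝ (HermM d) where
  inner X Y := (trace ((X : Mat d) * (Y : Mat d))).re
  conj_inner_symm X Y := by rw [starRingEnd_apply, star_trivial, trace_mul_comm]
  re_inner_nonneg X := (Complex.nonneg_iff.mp (zero_le_trace_mul_self X)).1
  definite X h := (trace_mul_self_eq_zero_iff X).mp
    (Complex.ext h (Complex.nonneg_iff.mp (zero_le_trace_mul_self X)).2.symm)
  add_left X Y Z := by simp [add_mul]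
  smul_left X Y r := by simp

instance : NormedAddCommGroup (HermM d) := (innerCore d).toNormedAddCommGroup

instance : InnerProductSpace ℝ (HermM d) := .ofCore (innerCore d).toCore

lemma inner_def (X Y : HermM d) : ⟪X, Y⟫_ℝ = (trace ((X : Mat d) * (Y : Mat d))).re := rfl

lemma norm_hermOne_sq : ‖hermOne d‖ ^ 2 = d := by
  rw [← real_inner_self_eq_norm_sq, inner_def]
  simp [hermOne]

lemma outerSO_hermOne :
    outerSO d (hermOne d) (hermOne d) = rankOne ℝ (hermOne d) (hermOne d) := by
  ext X
  simp [outerSO, hermOne, inner_def]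

end HermM

theorem superoperator_trace_inverse_bound_general (d : ℕ) (hd : 2 ≤ d)
    (F G : HermM d →ₗ[ℝ] HermM d) (𝓅 : ℝ)
    (hsym : ∀ X Y : HermM d,
      Matrix.trace (((F X : Mat d)) * (Y : Mat d)) =
      Matrix.trace ((X : Mat d) * ((F Y : Mat d))))
    (hposdef : ∀ X : HermM d, X ≠ 0 →
      0 < (Matrix.trace (((F X : Mat d)) * (X : Mat d))).re)
    (hTrF : LinearMap.trace ℝ (HermM d) F = (d : ℝ) ^ 2 * 𝓅)
    (heig : F (hermOne d) = (d : ℝ) • hermOne d)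
    (hGF : G ∘ₗ F = LinearMap.id) :
    1 / (d : ℝ) + ((d : ℝ) ^ 2 - 1) ^ 2 / ((d : ℝ) ^ 2 * 𝓅 - d) ≤
      LinearMap.trace ℝ (HermM d) G ∧
    (LinearMap.trace ℝ (HermM d) G =
        1 / (d : ℝ) + ((d : ℝ) ^ 2 - 1) ^ 2 / ((d : ℝ) ^ 2 * 𝓅 - d) ↔
      F = (((d : ℝ) ^ 2 * 𝓅 - d) / ((d : ℝ) ^ 2 - 1)) • LinearMap.id +
        (1 - (((d : ℝ) ^ 2 * 𝓅 - d) / ((d : ℝ) ^ 2 - 1)) / d) •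
          outerSO d (hermOne d) (hermOne d)) := by
  set α := ((d : ℝ) ^ 2 * 𝓅 - d) / ((d : ℝ) ^ 2 - 1) with hα_def
  have hd' : (2 : ℝ) ≤ d := by exact_mod_cast hd
  have hfinrank : (Module.finrank ℝ (HermM d) : ℝ) = (d : ℝ) ^ 2 := by
    rw [HermM.finrank_eq, Nat.cast_pow]
  have hα : LinearMap.trace ℝ (HermM d) F = d + (Module.finrank ℝ (HermM d) - 1) * α := by
    have : (d : ℝ) ^ 2 - 1 ≠ 0 := by nlinarith
    rw [hTrF, hfinrank, hα_def, mul_div_cancel₀ _ this]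
    ring
  have hone : hermOne d ≠ 0 := fun h => by
    have := HermM.norm_hermOne_sq (d := d)
    rw [h, norm_zero] at this
    linarith
  have hbound := LinearMap.IsSymmetric.trace_inverse_bound
    (fun X Y => congrArg Complex.re (hsym X Y)) hposdef hGF
    (by rw [HermM.finrank_eq]; nlinarith) hone heig hα
  have hd0 : (d : ℝ) ≠ 0 := by positivity
  rwa [hfinrank, HermM.norm_hermOne_sq, ← HermM.outerSO_hermOne, Module.End.one_eq_id,
    show ((d : ℝ) - α) / d = 1 - α / d by field_simp, hα_def,
    show ((d : ℝ) ^ 2 - 1) / (((d : ℝ) ^ 2 * 𝓅 - d) / ((d : ℝ) ^ 2 - 1)) =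
      ((d : ℝ) ^ 2 - 1) ^ 2 / ((d : ℝ) ^ 2 * 𝓅 - d) by rw [div_div_eq_mul_div, ← sq],
    inv_eq_one_div] at hbound

/-- Let F be a positive definite (self-adjoint) superoperator on
Hermitian d×d matrices with Tr(F) = d²𝓅, invertible with inverse G, and having
the identity matrix as eigenvector with eigenvalue d. Then
Tr(F⁻¹) ≥ 1/d + (d²−1)²/(d²𝓅 − d), with equality iff F = αI + β|1⟩⟩⟨⟨1| with
α = (d²𝓅 − d)/(d²−1) and β = 1 − α/d. -/
theorem superoperator_trace_inverse_bound (d : ℕ) (hd : 2 ≤ d)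
    (F G : HermM d →ₗ[ℝ] HermM d) (𝓅 : ℝ)
    (hsym : ∀ X Y : HermM d,
      Matrix.trace (((F X : Mat d)) * (Y : Mat d)) =
      Matrix.trace ((X : Mat d) * ((F Y : Mat d))))
    (hposdef : ∀ X : HermM d, X ≠ 0 →
      0 < (Matrix.trace (((F X : Mat d)) * (X : Mat d))).re)
    (hTrF : LinearMap.trace ℝ (HermM d) F = (d : ℝ) ^ 2 * 𝓅)
    (heig : F (hermOne d) = (d : ℝ) • hermOne d)
    (hGF : G ∘ₗ F = LinearMap.id) (hFG : F ∘ₗ G = LinearMap.id) :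
    1 / (d : ℝ) + ((d : ℝ) ^ 2 - 1) ^ 2 / ((d : ℝ) ^ 2 * 𝓅 - d) ≤
      LinearMap.trace ℝ (HermM d) G ∧
    (LinearMap.trace ℝ (HermM d) G =
        1 / (d : ℝ) + ((d : ℝ) ^ 2 - 1) ^ 2 / ((d : ℝ) ^ 2 * 𝓅 - d) ↔
      F = (((d : ℝ) ^ 2 * 𝓅 - d) / ((d : ℝ) ^ 2 - 1)) • LinearMap.id +
        (1 - (((d : ℝ) ^ 2 * 𝓅 - d) / ((d : ℝ) ^ 2 - 1)) / d) •
          outerSO d (hermOne d) (hermOne d)) :=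
  superoperator_trace_inverse_bound_general d hd F G 𝓅 hsym hposdef hTrF heig hGF
end
end

section
/- Let {Π_j}_{j=0}^{d²-1} be a minimal IC POVM on ℂ^d, and suppose the structure constants C_{jkl} defined by [Π_j, Π_k] = Σ_l C_{jkl} Π_l are completely antisymmetric. Then all Π_j have trace 1/d and {Π_j} is a generalized SIC measurement. -/
open Matrix ComplexOrder

noncomputable section

/-!
Let `S X = ∑ₗ tr(Πₗ X) Πₗ`. Complete antisymmetry of the structure constants makes them invariant
under cyclic permutations, which is exactly what is needed for `S` to commute with `ad Πⱼ` for
every `j`; since the `Πⱼ` span all matrices over `ℂ`, `S` commutes with every `ad A`. A map with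
this property preserves the joint eigenspaces of the `ad Eᵢᵢ`, and working through the matrix
units shows that it has the form `X ↦ a X + b tr(X) 1`. The `Πⱼ` form a basis, so comparing
coefficients in `S Πₖ = a Πₖ + b tr(Πₖ) ∑ₗ Πₗ` gives `tr(Πₗ Πₖ) = a δₗₖ + b tr(Πₖ)`. Summing over
`l` shows that `tr Πₖ` does not depend on `k`, hence equals `d / d²`, and `a > 0` because
`tr((Πⱼ - Πₖ)²) = 2a` for `j ≠ k`.
-/

open ComplexStarModule

namespace Matrix

attribute [local instance] LieRing.ofAssociativeRing

section Schur

variable {n R : Type*} [Fintype n] [DecidableEq n] [Field R]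

theorem lie_single_self_apply (i p q : n) (M : Matrix n n R) :
    ⁅single i i (1 : R), M⁆ p q =
      ((if p = i then 1 else 0) - (if q = i then 1 else 0)) * M p q := by
  by_cases hp : p = i <;> by_cases hq : q = i <;>
    simp [Ring.lie_def, hp, hq, single_mul_apply_of_ne, mul_single_apply_of_ne]

theorem single_lie_single_of_ne {i k : n} (hik : i ≠ k) (j : n) :
    ⁅single i j (1 : R), single j k 1⁆ = (single i k 1 : Matrix n n R) := by
  simp [Ring.lie_def, single_mul_single_of_ne, hik.symm]

theorem single_lie_single_self (i j : n) :
    ⁅single i j (1 : R), single j i 1⁆ = (single i i 1 - single j j 1 : Matrix n n R) := by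
  simp [Ring.lie_def]

variable [CharZero R] {T : Matrix n n R →ₗ[R] Matrix n n R}

theorem apply_single_eq_smul_of_lie_comm (hT : ∀ A X : Matrix n n R, T ⁅A, X⁆ = ⁅A, T X⁆)
    {i j : n} (hij : i ≠ j) : T (single i j 1) = T (single i j 1) i j • single i j 1 := by
  -- `single i j 1` spans the joint eigenspace of `ad (single i i 1)` for the eigenvalue `1` and of
  -- `ad (single j j 1)` for `-1`; `T` preserves both (the second step needs `2 ≠ 0`).
  set M := T (single i j 1)
  have hi : ⁅single i i (1 : R), M⁆ = M := by
    rw [← hT]; congr 1; simp [Ring.lie_def, single_mul_single_of_ne, hij.symm]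
  have hj : ⁅single j j (1 : R), M⁆ = -M := by
    rw [← hT, ← map_neg]; congr 1; simp [Ring.lie_def, single_mul_single_of_ne, hij.symm]
  ext p q
  have hpi := congrFun₂ hi p q
  have hpj := congrFun₂ hj p q
  rw [lie_single_self_apply] at hpi hpj
  rw [neg_apply] at hpj
  by_cases hpq : p = i ∧ q = j
  · obtain ⟨rfl, rfl⟩ := hpq; simp
  rw [smul_apply, single_apply_of_ne _ _ _ _ _ fun h => hpq ⟨h.1.symm, h.2.symm⟩, smul_zero]
  generalize M p q = m at hpi hpj ⊢
  split_ifs at hpi hpj <;> grind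

theorem exists_apply_single_eq_smul_of_lie_comm
    (hT : ∀ A X : Matrix n n R, T ⁅A, X⁆ = ⁅A, T X⁆) :
    ∃ a : R, ∀ i j k : n, j ≠ k →
      T ⁅single i j (1 : R), single j k 1⁆ = a • ⁅single i j (1 : R), single j k 1⁆ := by
  set c : n → n → R := fun i j => T (single i j 1) i j
  have hlie : ∀ i j k : n, j ≠ k →
      T ⁅single i j (1 : R), single j k 1⁆ = c j k • ⁅single i j (1 : R), single j k 1⁆ :=
    fun i j k hjk => by rw [hT, apply_single_eq_smul_of_lie_comm hT hjk, lie_smul]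
  have hcol : ∀ i j k, i ≠ k → j ≠ k → c i k = c j k := by
    intro i j k hik hjk
    have := congrFun₂ (hlie i j k hjk) i k
    simpa [single_lie_single_of_ne hik] using this
  have hsym : ∀ j k, j ≠ k → c j k = c k j := by
    intro j k hjk
    have h1 := congrFun₂ (hlie k j k hjk) k k
    have h2 := congrFun₂ (hlie j k j hjk.symm) k k
    rw [single_lie_single_self] at h1 h2
    rw [← neg_sub, map_neg] at h2
    simp only [map_sub, sub_apply, smul_apply, single_apply_same, hjk, and_self,
      not_false_eq_true, single_apply_of_ne, sub_zero, smul_eq_mul, mul_one, neg_apply, neg_sub,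
      zero_sub, mul_neg] at h1 h2
    linear_combination -h1 - h2
  -- Moving within a column and transposing connects any two off-diagonal positions.
  have hall : ∀ i j k l, i ≠ j → k ≠ l → c i j = c k l := by
    intro i j k l hij hkl
    by_cases hli : l = i
    · subst hli
      rw [hsym l j hij, hcol j k l hij.symm hkl]
    · rw [hsym i j hij, hcol j l i hij.symm hli, hsym l i hli, hcol i k l (Ne.symm hli) hkl]
  rcases subsingleton_or_nontrivial n with hn | hn
  · exact ⟨0, fun i j k hjk => absurd (Subsingleton.elim j k) hjk⟩
  obtain ⟨i₀, j₀, h₀⟩ := exists_pair_ne n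
  exact ⟨c i₀ j₀, fun i j k hjk => by rw [hlie i j k hjk, hall j k i₀ j₀ hjk h₀]⟩

theorem exists_eq_smul_add_trace_smul_of_lie_comm
    (hT : ∀ A X : Matrix n n R, T ⁅A, X⁆ = ⁅A, T X⁆) :
    ∃ (a : R) (M : Matrix n n R), ∀ X, T X = a • X + X.trace • M := by
  obtain ⟨a, ha⟩ := exists_apply_single_eq_smul_of_lie_comm hT
  rcases isEmpty_or_nonempty n with hn | ⟨⟨i₀⟩⟩
  · exact ⟨0, 0, fun X => Subsingleton.elim _ _⟩
  refine ⟨a, T (single i₀ i₀ 1) - a • single i₀ i₀ 1, fun X => ?_⟩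
  suffices T - a • LinearMap.id =
      (traceLinearMap n R R).smulRight (T (single i₀ i₀ 1) - a • single i₀ i₀ 1) by
    simpa [sub_eq_iff_eq_add'] using LinearMap.congr_fun this X
  refine ext_linearMap _ fun p q => LinearMap.ext_ring ?_
  simp only [LinearMap.comp_apply, singleLinearMap_apply, LinearMap.sub_apply, LinearMap.smul_apply,
    LinearMap.id_apply, LinearMap.smulRight_apply, traceLinearMap_apply]
  by_cases hpq : p = q
  · subst hpq
    rw [trace_single_eq_same, one_smul]
    rcases eq_or_ne p i₀ with rfl | hp
    · rfl
    have := ha p i₀ p hp.symm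
    rw [single_lie_single_self, map_sub, smul_sub] at this
    rw [sub_eq_sub_iff_sub_eq_sub, this]
  · have := ha p p q hpq
    rw [single_lie_single_of_ne hpq] at this
    rw [trace_single_eq_of_ne _ _ _ hpq, zero_smul, this, sub_self]

theorem exists_eq_smul_add_trace_smul_one_of_lie_comm
    (hT : ∀ A X : Matrix n n R, T ⁅A, X⁆ = ⁅A, T X⁆) :
    ∃ a b : R, ∀ X, T X = a • X + (b * X.trace) • 1 := by
  obtain ⟨a, M, haM⟩ := exists_eq_smul_add_trace_smul_of_lie_comm hT
  have hM : ∀ A X : Matrix n n R, X.trace • ⁅A, M⁆ = 0 := by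
    intro A X
    have := hT A X
    rw [haM, haM, LieAlgebra.matrix_trace_commutator_zero, zero_smul, add_zero] at this
    rwa [lie_add, lie_smul, lie_smul, left_eq_add] at this
  obtain ⟨b, hb⟩ := mem_range_scalar_of_commute_single (M := M) fun i j _ => by
    show single i j 1 * M = M * single i j 1
    simpa [Ring.lie_def, sub_eq_zero] using hM (single i j 1) (single j j 1)
  refine ⟨a, b, fun X => ?_⟩
  rw [haM, ← hb, scalar_apply, ← smul_one_eq_diagonal, smul_smul, mul_comm]

end Schur

section FrameOperator

variable {ι n R : Type*} [Fintype ι] [Fintype n] [DecidableEq n]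

theorem trace_mul_lie [CommRing R] (A B X : Matrix n n R) :
    (A * ⁅B, X⁆).trace = (⁅A, B⁆ * X).trace := by
  simp only [Ring.lie_def, Matrix.mul_sub, Matrix.sub_mul, trace_sub, Matrix.mul_assoc]
  rw [trace_mul_comm B, Matrix.mul_assoc]

variable [CommRing R]

def frameOperator (P : ι → Matrix n n R) : Matrix n n R →ₗ[R] Matrix n n R :=
  ∑ l, ((traceLinearMap n R R).comp (LinearMap.mulLeft R (P l))).smulRight (P l)

theorem frameOperator_apply (P : ι → Matrix n n R) (X : Matrix n n R) :
    frameOperator P X = ∑ l, (P l * X).trace • P l := by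
  simp [frameOperator]

variable {P : ι → Matrix n n R} {C : ι → ι → ι → R}

theorem frameOperator_lie (hC : ∀ j k, ⁅P j, P k⁆ = ∑ l, C j k l • P l)
    (hcyc : ∀ j k l, C j k l = C k l j) (j : ι) (X : Matrix n n R) :
    frameOperator P ⁅P j, X⁆ = ⁅P j, frameOperator P X⁆ := by
  have hL : ∀ l, (P l * ⁅P j, X⁆).trace = ∑ m, C j m l * (P m * X).trace := fun l => by
    simp only [trace_mul_lie, hC, Finset.sum_mul, trace_sum, smul_mul_assoc, trace_smul,
      smul_eq_mul, hcyc l j]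
  calc frameOperator P ⁅P j, X⁆ = ∑ l, ∑ m, (C j m l * (P m * X).trace) • P l := by
        simp only [frameOperator_apply, hL, Finset.sum_smul]
    _ = ∑ m, (P m * X).trace • ∑ l, C j m l • P l := by
        rw [Finset.sum_comm]
        simp only [Finset.smul_sum, smul_smul, mul_comm]
    _ = ⁅P j, frameOperator P X⁆ := by
        rw [frameOperator_apply, lie_sum]
        refine Finset.sum_congr rfl fun m _ => ?_
        rw [← hC, lie_smul]

theorem frameOperator_lie_of_mem_span (hC : ∀ j k, ⁅P j, P k⁆ = ∑ l, C j k l • P l)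
    (hcyc : ∀ j k l, C j k l = C k l j) {A : Matrix n n R}
    (hA : A ∈ Submodule.span R (Set.range P)) (X : Matrix n n R) :
    frameOperator P ⁅A, X⁆ = ⁅A, frameOperator P X⁆ := by
  induction hA using Submodule.span_induction with
  | mem _ h =>
    obtain ⟨j, rfl⟩ := h
    exact frameOperator_lie hC hcyc j X
  | zero => simp
  | add A B _ _ hA hB => rw [add_lie, map_add, hA, hB, add_lie]
  | smul t A _ hA => rw [smul_lie, map_smul, hA, smul_lie]

variable [DecidableEq ι]

theorem trace_mul_eq_of_frameOperator_eq (hli : LinearIndependent R P) (hsum : ∑ l, P l = 1)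
    {a b : R} (hS : ∀ X, frameOperator P X = a • X + (b * X.trace) • 1) (l k : ι) :
    (P l * P k).trace = (if l = k then a else 0) + b * (P k).trace := by
  refine Fintype.linearIndependent_iffₛ.mp hli (fun m => (P m * P k).trace)
    (fun m => (if m = k then a else 0) + b * (P k).trace) ?_ l
  rw [← frameOperator_apply, hS, ← hsum]
  simp [add_smul, Finset.sum_add_distrib, ite_smul, Finset.smul_sum]

end FrameOperator

theorem trace_eq_card_div_card_of_trace_mul_eq {ι n R : Type*} [Fintype ι] [DecidableEq ι]
    [Fintype n] [DecidableEq n] [Field R] [CharZero R] {P : ι → Matrix n n R}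
    (hsum : ∑ l, P l = 1) {a b : R} (ha : a ≠ 0)
    (hG : ∀ l k, (P l * P k).trace = (if l = k then a else 0) + b * (P k).trace) (k : ι) :
    (P k).trace = Fintype.card n / Fintype.card ι := by
  have hself : ∀ k, (P k).trace * (1 - Fintype.card ι * b) = a := fun k => by
    have h := congrArg trace (congrArg (· * P k) hsum)
    simp only [Finset.sum_mul, trace_sum, one_mul, hG, Finset.sum_add_distrib, Finset.sum_ite_eq',
      Finset.mem_univ, if_true, Finset.sum_const, Finset.card_univ, nsmul_eq_mul] at h
    linear_combination -h
  have hne : 1 - Fintype.card ι * b ≠ 0 := right_ne_zero_of_mul ((hself k).symm ▸ ha)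
  have : Nonempty ι := ⟨k⟩
  have hι : (Fintype.card ι : R) ≠ 0 := Nat.cast_ne_zero.mpr Fintype.card_ne_zero
  have hconst : ∀ l, (P l).trace = (P k).trace := fun l =>
    mul_right_cancel₀ hne ((hself l).trans (hself k).symm)
  have h := congrArg trace hsum
  simp only [trace_sum, hconst, Finset.sum_const, Finset.card_univ, nsmul_eq_mul, trace_one] at h
  rw [eq_div_iff hι, mul_comm, h]

theorem pos_of_trace_mul_eq {ι n : Type*} [DecidableEq ι] [Fintype n] {P : ι → Matrix n n ℂ}
    (hP : ∀ j, (P j).IsHermitian) {a : ℂ} {τ : ι → ℂ}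
    (hG : ∀ l k, (P l * P k).trace = (if l = k then a else 0) + τ k) {j k : ι}
    (hne : P j ≠ P k) : 0 < a := by
  have hjk : j ≠ k := fun h => hne (h ▸ rfl)
  have h2a : ((P j - P k)ᴴ * (P j - P k)).trace = 2 * a := by
    rw [conjTranspose_sub, (hP j).eq, (hP k).eq]
    simp only [Matrix.mul_sub, Matrix.sub_mul, trace_sub, hG, if_pos, if_neg hjk, if_neg hjk.symm]
    ring
  have hpos : 0 < ((P j - P k)ᴴ * (P j - P k)).trace :=
    (posSemidef_conjTranspose_mul_self _).trace_nonneg.lt_of_ne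
      (Ne.symm (trace_conjTranspose_mul_self_eq_zero_iff.not.mpr (sub_ne_zero.mpr hne)))
  rw [h2a] at hpos
  simpa using (pos_iff_pos_of_mul_pos hpos).mp two_pos

theorem IsHermitian.ofReal_re_trace_mul {n : Type*} [Fintype n] {A B : Matrix n n ℂ}
    (hA : A.IsHermitian) (hB : B.IsHermitian) :
    (((A * B).trace.re : ℝ) : ℂ) = (A * B).trace := by
  refine Complex.conj_eq_iff_re.mp ?_
  rw [starRingEnd_apply, ← trace_conjTranspose, conjTranspose_mul, hA.eq, hB.eq, trace_mul_comm]

theorem span_complex_eq_top_of_isHermitian_mem_span {n : Type*} [Fintype n]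
    {s : Set (Matrix n n ℂ)}
    (h : ∀ A : Matrix n n ℂ, A.IsHermitian → A ∈ Submodule.span ℝ s) :
    Submodule.span ℂ s = ⊤ := by
  have h' : ∀ A : Matrix n n ℂ, A.IsHermitian → A ∈ Submodule.span ℂ s :=
    fun A hA => Submodule.span_le_restrictScalars ℝ ℂ s (h A hA)
  refine Submodule.eq_top_iff'.mpr fun A => ?_
  rw [← realPart_add_I_smul_imaginaryPart A]
  exact add_mem (h' _ (ℜ A).2.isHermitian) (Submodule.smul_mem _ _ (h' _ (ℑ A).2.isHermitian))

end Matrix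

theorem antisymmetric_structure_constants_genSIC_general (d : ℕ) (hd : 2 ≤ d)
    (P : Fin (d ^ 2) → Mat d)
    (hpsd : ∀ j, (P j).PosSemidef)
    (hsum : ∑ j, P j = 1)
    (hIC : ∀ A : Mat d, A.IsHermitian → A ∈ Submodule.span ℝ (Set.range P))
    (C : Fin (d ^ 2) → Fin (d ^ 2) → Fin (d ^ 2) → ℂ)
    (hC : ∀ j k, P j * P k - P k * P j = ∑ l, C j k l • P l)
    (hanti : ∀ j k l, C j k l = -C k j l ∧ C j k l = -C j l k ∧ C j k l = -C l k j) :
    (∀ j, Matrix.trace (P j) = (1 / (d : ℂ))) ∧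
    (∃ α ζ : ℝ, 0 < α ∧ ∀ j k,
      Matrix.trace (((d : ℂ) • P j) * ((d : ℂ) • P k)) =
        if j = k then ((α : ℂ) + (ζ : ℂ)) else (ζ : ℂ)) := by
  have hspan := span_complex_eq_top_of_isHermitian_mem_span hIC
  have hli : LinearIndependent ℂ P :=
    linearIndependent_of_top_le_span_of_card_eq_finrank hspan.ge
      (by simp [sq, Module.finrank_matrix])
  have hcyc : ∀ j k l, C j k l = C k l j := fun j k l => by
    rw [(hanti j k l).1, (hanti k j l).2.1, neg_neg]
  obtain ⟨a, b, hab⟩ := exists_eq_smul_add_trace_smul_one_of_lie_comm fun A X =>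
    frameOperator_lie_of_mem_span hC hcyc (hspan ▸ Submodule.mem_top : A ∈ _) X
  have hG := trace_mul_eq_of_frameOperator_eq hli hsum hab
  have : Nontrivial (Fin (d ^ 2)) := Fin.nontrivial_iff_two_le.mpr (by nlinarith)
  obtain ⟨j₀, j₁, hj⟩ := exists_pair_ne (Fin (d ^ 2))
  have ha : 0 < a := pos_of_trace_mul_eq (fun j => (hpsd j).1) hG (hli.injective.ne hj)
  have htr : ∀ k, (P k).trace = 1 / d := fun k => by
    rw [trace_eq_card_div_card_of_trace_mul_eq hsum ha.ne' hG k, Fintype.card_fin,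
      Fintype.card_fin, Nat.cast_pow]
    field_simp
  have hζ : ∀ j k, (P j * P k).trace = (if j = k then a else 0) + (P j₀ * P j₁).trace := by
    intro j k
    rw [hG, hG j₀, if_neg hj, htr, htr, zero_add]
  refine ⟨htr, d ^ 2 * a.re, d ^ 2 * (P j₀ * P j₁).trace.re, ?_, fun j k => ?_⟩
  · exact mul_pos (by positivity) (Complex.pos_iff.mp ha).1
  · have ha_re : (a.re : ℂ) = a := (Complex.eq_re_of_ofReal_le ha.le).symm
    have hζ_re := (hpsd j₀).1.ofReal_re_trace_mul (hpsd j₁).1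
    rw [smul_mul_smul_comm, trace_smul, hζ, smul_eq_mul]
    split_ifs <;> push_cast [ha_re, hζ_re] <;> ring

/-- If the structure constants of a minimal IC POVM, defined by
[Π_j, Π_k] = Σ_l C_{jkl} Π_l with C purely imaginary, are completely
antisymmetric, then all Π_j have trace 1/d and {Π_j} is a generalized SIC. -/
theorem antisymmetric_structure_constants_genSIC (d : ℕ) (hd : 2 ≤ d)
    (P : Fin (d ^ 2) → Mat d)
    (hpsd : ∀ j, (P j).PosSemidef)
    (hsum : ∑ j, P j = 1)
    (hIC : ∀ A : Mat d, A.IsHermitian → A ∈ Submodule.span ℝ (Set.range P))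
    (C : Fin (d ^ 2) → Fin (d ^ 2) → Fin (d ^ 2) → ℂ)
    (himag : ∀ j k l, (C j k l).re = 0)
    (hC : ∀ j k, P j * P k - P k * P j = ∑ l, C j k l • P l)
    (hanti : ∀ j k l, C j k l = -C k j l ∧ C j k l = -C j l k ∧ C j k l = -C l k j) :
    (∀ j, Matrix.trace (P j) = (1 / (d : ℂ))) ∧
    (∃ α ζ : ℝ, 0 < α ∧ ∀ j k,
      Matrix.trace (((d : ℂ) • P j) * ((d : ℂ) • P k)) =
        if j = k then ((α : ℂ) + (ζ : ℂ)) else (ζ : ℂ)) :=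
  antisymmetric_structure_constants_genSIC_general d hd P hpsd hsum hIC C hC hanti
end
end
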